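/- arXiv:2103.07696 — 2 statements merged into one kernel-verified Lean document; each statement's English description precedes it below -/
import Mathlib

section
/- Let G₁ and G₂ be finite trees such that G₁ is a subgraph of G₂, i.e. there exists an injective graph homomorphism from G₁ to G₂. Then λ₂(G₂) ≤ λ₂(G₁), where λ₂ denotes the first nonzero Steklov eigenvalue. -/
open Finset

attribute [local instance] Classical.propDecidable

namespace Steklov

variable {V : Type} [Fintype V] [DecidableEq V]

/-- The boundary of a graph: the set of vertices of degree one. -/
noncomputable def bdry (G : SimpleGraph V) : Finset V :=
  Finset.univ.filter (fun v => G.degree v = 1)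

/-- The graph Laplacian `Δf(x) = Σ_{y∼x} (f x - f y)`. -/
noncomputable def lap (G : SimpleGraph V) (f : V → ℝ) (x : V) : ℝ :=
  ∑ y ∈ G.neighborFinset x, (f x - f y)

/-- `f` is a Steklov eigenfunction of `G` with eigenvalue `lam`:
`f ≠ 0`, `Δf = 0` on the interior and `∂f/∂n = lam • f` on the boundary. -/
noncomputable def IsEigenpair (G : SimpleGraph V) (lam : ℝ) (f : V → ℝ) : Prop :=
  f ≠ 0 ∧ (∀ x, x ∉ bdry G → lap G f x = 0) ∧ ∀ x ∈ bdry G, lap G f x = lam * f x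

/-- The first nonzero Steklov eigenvalue of `G`. -/
noncomputable def lambda2 (G : SimpleGraph V) : ℝ :=
  sInf {lam : ℝ | 0 < lam ∧ ∃ f : V → ℝ, IsEigenpair G lam f}

/-- `f` is a `lam`-flow to `x` on `G`. -/
noncomputable def IsFlow (G : SimpleGraph V) (lam : ℝ) (x : V) (f : V → ℝ) : Prop :=
  f ≠ 0 ∧ (∀ w, w ∉ bdry G → w ≠ x → lap G f w = 0) ∧
    ∀ w ∈ bdry G, w ≠ x → lap G f w = lam * f w

/-- The Rayleigh quotient of `f` (sum over undirected edges in the numerator). -/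
noncomputable def rayleigh (G : SimpleGraph V) (f : V → ℝ) : ℝ :=
  ((∑ x, ∑ y ∈ G.neighborFinset x, (f x - f y) ^ 2) / 2) / ∑ x ∈ bdry G, f x ^ 2

/-- `Σ(G,x)`: the set of `lam ≥ 0` admitting a `lam`-flow `f` to `x` with `f x = 0`
which increases along edges pointing away from `x`. -/
def SigmaSet (G : SimpleGraph V) (x : V) : Set ℝ :=
  {lam | 0 ≤ lam ∧ ∃ f : V → ℝ, IsFlow G lam x f ∧ f x = 0 ∧
    ∀ y z : V, G.Adj y z → G.dist x z < G.dist x y → f z < f y}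

/-- `Σ̂(G,x)`: the set of `lam ≥ 0` admitting a `lam`-flow `f` to `x` with `f x = 0`. -/
def SigmaHatSet (G : SimpleGraph V) (x : V) : Set ℝ :=
  {lam | 0 ≤ lam ∧ ∃ f : V → ℝ, IsFlow G lam x f ∧ f x = 0}

/-- `σ(G,x) = inf Σ(G,x)`. -/
noncomputable def sigma (G : SimpleGraph V) (x : V) : ℝ := sInf (SigmaSet G x)

/-- `σ̂(G,x) = inf Σ̂(G,x)`. -/
noncomputable def sigmaHat (G : SimpleGraph V) (x : V) : ℝ := sInf (SigmaHatSet G x)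

/-- The vertex set of the branch from `(u,v)`: the connected component of `u`
after deleting the edge between `u` and `v`. -/
def branchSet (G : SimpleGraph V) (u v : V) : Set V :=
  {w | (G.deleteEdges {s(u, v)}).Reachable u w}

/-- The vertex set of the subtree `H(u,v)` spanned by the branch from `(u,v)` together
with `v`. -/
def branchClosed (G : SimpleGraph V) (u v : V) : Set V :=
  insert v (branchSet G u v)

/-- `σ(H(u,v), v)`, computed intrinsically in the subtree `H(u,v)`. -/
noncomputable def sigmaB (G : SimpleGraph V) (u v : V) : ℝ :=
  sigma (G.induce (branchClosed G u v)) ⟨v, Set.mem_insert _ _⟩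

/-- The double `(G)²_x` of `G` at `x`: two disjoint copies of `G` with the two
copies of `x` identified. -/
def doubleAt (G : SimpleGraph V) (x : V) : SimpleGraph (V ⊕ {v : V // v ≠ x}) where
  Adj a b :=
    match a, b with
    | Sum.inl u, Sum.inl w => G.Adj u w
    | Sum.inr u, Sum.inr w => G.Adj u.1 w.1
    | Sum.inl u, Sum.inr w => u = x ∧ G.Adj x w.1
    | Sum.inr u, Sum.inl w => w = x ∧ G.Adj x u.1
  symm := by
    constructor
    rintro (u | u) (w | w) h
    · exact h.symm
    · exact h
    · exact h
    · exact h.symm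
  loopless := by
    constructor
    rintro (u | u) h
    · exact G.loopless.irrefl u h
    · exact G.loopless.irrefl u.1 h

end Steklov

/-!
By the variational principle, `λ₂(G) · Var(g) ≤ E(g)` for every function `g` harmonic in the
interior, where `E` is the Dirichlet energy and `Var` the variance of the boundary values: expand
`g` minus its boundary mean in an eigenbasis of the Dirichlet-to-Neumann map, whose kernel consists
of the constants.

If `G` arises from `H` by attaching a leaf `u` at `w₀`, extend an eigenfunction `f` of `H` with
eigenvalue `λ > 0` by `g u = f w₀ + Δf(w₀)`. This keeps `g` harmonic at `w₀`, the energy only gains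
the term `Δf(w₀)²`, and a direct computation (separating the cases `w₀ ∈ δH` and `w₀ ∉ δH`) gives
`E(g) ≤ λ · Var(g)`. Hence `λ₂(G) ≤ λ₂(H)`.

An injective homomorphism between trees is an isomorphism onto an induced subtree, and a tree is
obtained from any of its subtrees by attaching leaves one at a time.
-/

namespace Steklov

open Matrix SimpleGraph

variable {V : Type} {G : SimpleGraph V}

section Spectral

variable [Fintype V]

lemma mem_bdry {v : V} : v ∈ bdry G ↔ G.degree v = 1 := by
  simp [bdry]

lemma lap_eq_mulVec (G : SimpleGraph V) (f : V → ℝ) : lap G f = G.lapMatrix ℝ *ᵥ f := by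
  ext x
  rw [lapMatrix_mulVec_apply, lap, sum_sub_distrib, sum_const, card_neighborFinset_eq_degree,
    nsmul_eq_mul]

lemma lap_sub_const (f : V → ℝ) (c : ℝ) : lap G (fun x => f x - c) = lap G f := by
  ext x
  simp [lap]

/-- The Dirichlet energy; it equals the sum of `(f x - f y)²` over the edges `{x, y}`. -/
noncomputable def energy (G : SimpleGraph V) (f : V → ℝ) : ℝ := ∑ x, f x * lap G f x

lemma energy_eq_toLinearMap₂' (f : V → ℝ) :
    energy G f = toLinearMap₂' ℝ (G.lapMatrix ℝ) f f := by
  rw [toLinearMap₂'_apply', energy, lap_eq_mulVec]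
  rfl

lemma energy_nonneg (f : V → ℝ) : 0 ≤ energy G f := by
  rw [energy_eq_toLinearMap₂', lapMatrix_toLinearMap₂']
  positivity

lemma energy_sub_const (f : V → ℝ) (c : ℝ) : energy G (fun x => f x - c) = energy G f := by
  rw [energy_eq_toLinearMap₂', energy_eq_toLinearMap₂', lapMatrix_toLinearMap₂',
    lapMatrix_toLinearMap₂']
  simp

lemma eq_of_energy_eq_zero (hG : G.Preconnected) {f : V → ℝ} (hf : energy G f = 0) (x y : V) :
    f x = f y := by
  rw [energy_eq_toLinearMap₂', lapMatrix_toLinearMap₂'_apply'_eq_zero_iff_forall_reachable] at hf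
  exact hf x y (hG x y)

lemma sum_mul_lap_comm (f g : V → ℝ) : ∑ x, f x * lap G g x = ∑ x, g x * lap G f x := by
  change f ⬝ᵥ lap G g = g ⬝ᵥ lap G f
  rw [lap_eq_mulVec, lap_eq_mulVec, dotProduct_mulVec, ← mulVec_transpose,
    (isSymm_lapMatrix ℝ G).eq, dotProduct_comm]

lemma sum_lap (f : V → ℝ) : ∑ x, lap G f x = 0 := by
  have h := sum_mul_lap_comm (G := G) (fun _ => 1) f
  simp only [one_mul] at h
  rw [h, lap_eq_mulVec, lapMatrix_mulVec_const_eq_zero]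
  simp

section Harmonic

noncomputable def interiorLap (G : SimpleGraph V) : (V → ℝ) →ₗ[ℝ] ({x // x ∉ bdry G} → ℝ) :=
  LinearMap.funLeft ℝ ℝ Subtype.val ∘ₗ (G.lapMatrix ℝ).mulVecLin

noncomputable def harmonic (G : SimpleGraph V) : Submodule ℝ (V → ℝ) :=
  LinearMap.ker (interiorLap G)

lemma mem_harmonic {f : V → ℝ} : f ∈ harmonic G ↔ ∀ x ∉ bdry G, lap G f x = 0 := by
  simp [harmonic, interiorLap, funext_iff, lap_eq_mulVec]

lemma sum_mul_lap_of_mem_harmonic {f : V → ℝ} (hf : f ∈ harmonic G) (g : V → ℝ) :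
    ∑ x, g x * lap G f x = ∑ x ∈ bdry G, g x * lap G f x := by
  refine (sum_subset (subset_univ _) fun x _ hx => ?_).symm
  rw [mem_harmonic.1 hf x hx, mul_zero]

lemma eq_zero_of_mem_harmonic (hG : G.Preconnected) (hB : (bdry G).Nonempty) {f : V → ℝ}
    (hf : f ∈ harmonic G) (h0 : ∀ x ∈ bdry G, f x = 0) : f = 0 := by
  have hE : energy G f = 0 := by
    rw [energy, sum_mul_lap_of_mem_harmonic hf]
    exact sum_eq_zero fun x hx => by rw [h0 x hx, zero_mul]
  obtain ⟨b, hb⟩ := hB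
  ext x
  rw [eq_of_energy_eq_zero hG hE x b, h0 b hb, Pi.zero_apply]

noncomputable def restrictBdry (G : SimpleGraph V) : harmonic G →ₗ[ℝ] (bdry G → ℝ) :=
  LinearMap.funLeft ℝ ℝ Subtype.val ∘ₗ (harmonic G).subtype

lemma restrictBdry_injective (hG : G.Preconnected) (hB : (bdry G).Nonempty) :
    Function.Injective (restrictBdry G) := by
  rw [← LinearMap.ker_eq_bot, LinearMap.ker_eq_bot']
  intro f hf
  exact Subtype.ext <| eq_zero_of_mem_harmonic hG hB f.2 fun x hx => congrFun hf ⟨x, hx⟩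

lemma card_bdry_le_finrank_harmonic : #(bdry G) ≤ Module.finrank ℝ (harmonic G) := by
  have hrank := (interiorLap G).finrank_range_add_finrank_ker
  have hrange := Submodule.finrank_le (interiorLap G).range
  simp only [Module.finrank_fintype_fun_eq_card, Fintype.card_subtype_compl,
    Fintype.card_coe] at hrank hrange
  have := card_le_univ (bdry G)
  rw [harmonic]
  omega

/-- Unique solvability of the Dirichlet problem: injectivity comes from the energy, surjectivity
from counting dimensions. -/
noncomputable def harmonicEquiv (hG : G.Preconnected) (hB : (bdry G).Nonempty) :
    harmonic G ≃ₗ[ℝ] (bdry G → ℝ) :=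
  (restrictBdry G).linearEquivOfInjective (restrictBdry_injective hG hB) <|
    le_antisymm (LinearMap.finrank_le_finrank_of_injective (restrictBdry_injective hG hB))
      (by simpa using card_bdry_le_finrank_harmonic)

variable (hG : G.Preconnected) (hB : (bdry G).Nonempty)

noncomputable def harmExt (b : bdry G → ℝ) : V → ℝ := (harmonicEquiv hG hB).symm b

lemma harmExt_mem_harmonic (b : bdry G → ℝ) : harmExt hG hB b ∈ harmonic G :=
  Submodule.coe_mem _

lemma harmExt_apply_of_mem (b : bdry G → ℝ) {x : V} (hx : x ∈ bdry G) :
    harmExt hG hB b x = b ⟨x, hx⟩ :=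
  congrFun ((harmonicEquiv hG hB).apply_symm_apply b) ⟨x, hx⟩

lemma harmExt_restrict {g : V → ℝ} (hg : g ∈ harmonic G) : harmExt hG hB (fun x => g x) = g :=
  congrArg Subtype.val ((harmonicEquiv hG hB).symm_apply_apply ⟨g, hg⟩)

end Harmonic

section Eigenpair

variable {lam : ℝ} {f : V → ℝ}

lemma IsEigenpair.mem_harmonic (hf : IsEigenpair G lam f) : f ∈ harmonic G :=
  Steklov.mem_harmonic.2 hf.2.1

lemma IsEigenpair.energy_eq (hf : IsEigenpair G lam f) :
    energy G f = lam * ∑ x ∈ bdry G, f x ^ 2 := by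
  rw [energy, sum_mul_lap_of_mem_harmonic hf.mem_harmonic, mul_sum]
  exact sum_congr rfl fun x hx => by rw [hf.2.2 x hx]; ring

lemma IsEigenpair.sum_bdry_eq_zero (hf : IsEigenpair G lam f) (hlam : lam ≠ 0) :
    ∑ x ∈ bdry G, f x = 0 := by
  have h := sum_mul_lap_of_mem_harmonic hf.mem_harmonic 1
  simp only [Pi.one_apply, one_mul, sum_lap] at h
  rw [sum_congr rfl hf.2.2, ← mul_sum] at h
  exact (mul_eq_zero.1 h.symm).resolve_left hlam

lemma IsEigenpair.sum_sq_bdry_pos (hG : G.Preconnected) (hB : (bdry G).Nonempty)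
    (hf : IsEigenpair G lam f) : 0 < ∑ x ∈ bdry G, f x ^ 2 := by
  refine (sum_nonneg fun x _ => sq_nonneg (f x)).lt_of_ne fun h => hf.1 ?_
  refine eq_zero_of_mem_harmonic hG hB hf.mem_harmonic fun x hx => ?_
  exact pow_eq_zero_iff two_ne_zero |>.1 <|
    (sum_eq_zero_iff_of_nonneg fun y _ => sq_nonneg (f y)).1 h.symm x hx

lemma lambda2_le (hlam : 0 < lam) (hf : IsEigenpair G lam f) : lambda2 G ≤ lam :=
  csInf_le ⟨0, fun _ h => h.1.le⟩ ⟨hlam, f, hf⟩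

end Eigenpair

open RealInnerProductSpace in
/-- In the eigenbasis of `T`, the Rayleigh quotient of `b` is an average of the eigenvalues met
by `b`, so it dominates the least of them. -/
theorem _root_.LinearMap.IsSymmetric.exists_eigenvector_inner_ne_zero
    {E : Type*} [NormedAddCommGroup E] [InnerProductSpace ℝ E] [FiniteDimensional ℝ E]
    {T : E →ₗ[ℝ] E} (hT : T.IsSymmetric) {b : E} (hb : b ≠ 0) :
    ∃ μ : ℝ, ∃ v : E, T v = μ • v ∧ ⟪v, b⟫ ≠ 0 ∧ μ * ‖b‖ ^ 2 ≤ ⟪b, T b⟫ := by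
  set e := hT.eigenvectorBasis rfl
  set μ := hT.eigenvalues rfl
  have he : ∀ i, T (e i) = μ i • e i := hT.apply_eigenvectorBasis rfl
  have hsupp : (univ.filter fun i => ⟪e i, b⟫ ≠ 0).Nonempty := by
    by_contra! h
    simp only [filter_eq_empty_iff, mem_univ, true_implies, not_not] at h
    refine hb ((inner_self_eq_zero (𝕜 := ℝ)).1 ?_)
    rw [← e.sum_inner_mul_inner b b]
    exact sum_eq_zero fun i _ => by rw [h, mul_zero]
  obtain ⟨j, hj, hmin⟩ := exists_min_image _ μ hsupp
  refine ⟨μ j, e j, he j, (mem_filter.1 hj).2, ?_⟩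
  have hTb : ∀ i, ⟪e i, T b⟫ = μ i * ⟪e i, b⟫ := fun i => by
    rw [← hT, he, real_inner_smul_left]
  calc μ j * ‖b‖ ^ 2 = ∑ i, μ j * ⟪e i, b⟫ ^ 2 := by
        rw [← real_inner_self_eq_norm_sq, ← e.sum_inner_mul_inner b b, mul_sum]
        simp_rw [real_inner_comm b, sq]
    _ ≤ ∑ i, μ i * ⟪e i, b⟫ ^ 2 := by
        refine sum_le_sum fun i _ => ?_
        by_cases hi : ⟪e i, b⟫ = 0
        · simp [hi]
        · exact mul_le_mul_of_nonneg_right (hmin i (by simpa using hi)) (sq_nonneg _)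
    _ = ⟪b, T b⟫ := by
        rw [← e.sum_inner_mul_inner b (T b)]
        simp_rw [hTb, real_inner_comm b]
        exact sum_congr rfl fun i _ => by ring

section DirichletToNeumann

open RealInnerProductSpace

variable (hG : G.Preconnected) (hB : (bdry G).Nonempty)

/-- `b ↦ ∂(harmExt b)/∂n`: its eigenvectors are the boundary values of the Steklov
eigenfunctions. -/
noncomputable def dirichletToNeumann : EuclideanSpace ℝ (bdry G) →ₗ[ℝ] EuclideanSpace ℝ (bdry G) :=
  (WithLp.linearEquiv 2 ℝ (bdry G → ℝ)).symm.toLinearMap ∘ₗ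
    LinearMap.funLeft ℝ ℝ Subtype.val ∘ₗ (G.lapMatrix ℝ).mulVecLin ∘ₗ (harmonic G).subtype ∘ₗ
    (harmonicEquiv hG hB).symm.toLinearMap ∘ₗ (WithLp.linearEquiv 2 ℝ (bdry G → ℝ)).toLinearMap

lemma dirichletToNeumann_apply (b : EuclideanSpace ℝ (bdry G)) (i : bdry G) :
    dirichletToNeumann hG hB b i = lap G (harmExt hG hB b) i := by
  rw [lap_eq_mulVec]
  rfl

lemma inner_dirichletToNeumann (b c : EuclideanSpace ℝ (bdry G)) :
    ⟪b, dirichletToNeumann hG hB c⟫ = ∑ x, harmExt hG hB b x * lap G (harmExt hG hB c) x := by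
  rw [sum_mul_lap_of_mem_harmonic (harmExt_mem_harmonic hG hB c), ← sum_coe_sort,
    PiLp.inner_apply]
  refine sum_congr rfl fun i _ => ?_
  rw [dirichletToNeumann_apply, harmExt_apply_of_mem hG hB _ i.2]
  simp [mul_comm]

lemma dirichletToNeumann_isSymmetric : (dirichletToNeumann hG hB).IsSymmetric := fun b c => by
  rw [real_inner_comm, inner_dirichletToNeumann, inner_dirichletToNeumann, sum_mul_lap_comm]

lemma isEigenpair_harmExt {μ : ℝ} {v : EuclideanSpace ℝ (bdry G)}
    (hv : dirichletToNeumann hG hB v = μ • v) (hv0 : v ≠ 0) :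
    IsEigenpair G μ (harmExt hG hB v) := by
  refine ⟨fun h => hv0 ?_, mem_harmonic.1 (harmExt_mem_harmonic hG hB v), fun x hx => ?_⟩
  · ext i
    simpa [harmExt_apply_of_mem hG hB _ i.2] using congrFun h i
  · rw [← dirichletToNeumann_apply hG hB v ⟨x, hx⟩, hv, harmExt_apply_of_mem hG hB _ hx]
    rfl

/-- The kernel of `dirichletToNeumann` consists of the constants, so an eigenvector that is not
orthogonal to a mean-zero vector has a positive eigenvalue. -/
lemma dirichletToNeumann_eigenvalue_pos {μ : ℝ} {v b : EuclideanSpace ℝ (bdry G)}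
    (hv : dirichletToNeumann hG hB v = μ • v) (hvb : ⟪v, b⟫ ≠ 0) (hb : ∑ i, b i = 0) : 0 < μ := by
  have hv0 : 0 < ‖v‖ ^ 2 := by
    refine pow_pos (norm_pos_iff.2 fun h => hvb ?_) 2
    rw [h, inner_zero_left]
  have hE : μ * ‖v‖ ^ 2 = energy G (harmExt hG hB v) := by
    rw [energy, ← inner_dirichletToNeumann, hv, real_inner_smul_right, real_inner_self_eq_norm_sq]
  refine lt_of_le_of_ne (nonneg_of_mul_nonneg_left (hE ▸ energy_nonneg _) hv0) fun hμ => hvb ?_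
  obtain ⟨x₀, hx₀⟩ := hB
  have hconst : ∀ i : bdry G, v i = v ⟨x₀, hx₀⟩ := fun i => by
    have := eq_of_energy_eq_zero hG (by rw [← hE, ← hμ, zero_mul]) i x₀
    rwa [harmExt_apply_of_mem hG ⟨x₀, hx₀⟩ _ i.2, harmExt_apply_of_mem hG ⟨x₀, hx₀⟩ _ hx₀] at this
  rw [PiLp.inner_apply, ← mul_zero (v ⟨x₀, hx₀⟩), ← hb, mul_sum]
  refine sum_congr rfl fun i _ => ?_
  simp [hconst i, mul_comm]

end DirichletToNeumann

section Variational

noncomputable def bdryMean (G : SimpleGraph V) (g : V → ℝ) : ℝ :=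
  (∑ x ∈ bdry G, g x) / #(bdry G)

noncomputable def bdryVariance (G : SimpleGraph V) (g : V → ℝ) : ℝ :=
  ∑ x ∈ bdry G, (g x - bdryMean G g) ^ 2

lemma bdryVariance_eq (g : V → ℝ) :
    bdryVariance G g = ∑ x ∈ bdry G, g x ^ 2 - (∑ x ∈ bdry G, g x) ^ 2 / #(bdry G) := by
  rcases eq_or_ne #(bdry G) 0 with hm | hm
  · simp [bdryVariance, card_eq_zero.1 hm]
  simp only [bdryVariance, bdryMean, sub_sq, sum_add_distrib, sum_sub_distrib, sum_const,
    nsmul_eq_mul, ← sum_mul, ← mul_sum]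
  field_simp
  ring

lemma bdryVariance_pos {g : V → ℝ} {x y : V} (hx : x ∈ bdry G) (hy : y ∈ bdry G)
    (hxy : g x ≠ g y) : 0 < bdryVariance G g := by
  refine sum_pos' (fun _ _ => sq_nonneg _) ?_
  by_cases hgx : g x = bdryMean G g
  · exact ⟨y, hy, sq_pos_iff.2 (sub_ne_zero.2 (hgx ▸ hxy.symm))⟩
  · exact ⟨x, hx, sq_pos_iff.2 (sub_ne_zero.2 hgx)⟩

theorem exists_isEigenpair_mul_bdryVariance_le (hG : G.Preconnected) (hB : (bdry G).Nonempty)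
    {g : V → ℝ} (hg : g ∈ harmonic G) (hvar : 0 < bdryVariance G g) :
    ∃ μ f, 0 < μ ∧ IsEigenpair G μ f ∧ μ * bdryVariance G g ≤ energy G g := by
  set b : EuclideanSpace ℝ (bdry G) := WithLp.toLp 2 fun i => g i - bdryMean G g
  have hb_norm : ‖b‖ ^ 2 = bdryVariance G g := by
    rw [EuclideanSpace.norm_sq_eq, bdryVariance, ← sum_coe_sort (bdry G)]
    simp [b]
  have hb_sum : ∑ i, b i = 0 := by
    simp only [b]
    rw [sum_coe_sort (bdry G) (fun x => g x - bdryMean G g)]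
    simp only [sum_sub_distrib, sum_const, nsmul_eq_mul, bdryMean]
    field_simp [hB.card_pos.ne']
    ring
  have hb_ext : harmExt hG hB b = fun x => g x - bdryMean G g :=
    harmExt_restrict hG hB <|
      mem_harmonic.2 fun x hx => by rw [lap_sub_const, mem_harmonic.1 hg x hx]
  obtain ⟨μ, v, hv, hvb, hle⟩ :=
    (dirichletToNeumann_isSymmetric hG hB).exists_eigenvector_inner_ne_zero (b := b)
      fun h => hvar.ne' (by rw [← hb_norm, h, norm_zero, sq, zero_mul])
  refine ⟨μ, harmExt hG hB v, dirichletToNeumann_eigenvalue_pos hG hB hv hvb hb_sum,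
    isEigenpair_harmExt hG hB hv fun h => hvb (by rw [h, inner_zero_left]), ?_⟩
  rwa [hb_norm, inner_dirichletToNeumann, ← energy, hb_ext, energy_sub_const] at hle

theorem lambda2_mul_bdryVariance_le (hG : G.Preconnected) (hB : (bdry G).Nonempty) {g : V → ℝ}
    (hg : g ∈ harmonic G) : lambda2 G * bdryVariance G g ≤ energy G g := by
  have hvar : 0 ≤ bdryVariance G g := sum_nonneg fun x _ => sq_nonneg _
  rcases hvar.eq_or_lt with h | h
  · rw [← h, mul_zero]
    exact energy_nonneg g
  obtain ⟨μ, f, hμ, hf, hle⟩ := exists_isEigenpair_mul_bdryVariance_le hG hB hg h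
  exact (mul_le_mul_of_nonneg_right (lambda2_le hμ hf) h.le).trans hle

end Variational

lemma exists_isEigenpair_of_isTree [Nontrivial V] (hT : G.IsTree) :
    ∃ lam f, 0 < lam ∧ IsEigenpair G lam f := by
  obtain ⟨x, y, hxy, hx, hy⟩ := hT.exists_ne_and_degree_eq_one
  rw [← mem_bdry] at hx hy
  have hB : (bdry G).Nonempty := ⟨x, hx⟩
  set g := harmExt hT.connected.preconnected hB (Pi.single ⟨x, hx⟩ 1)
  have hvar : 0 < bdryVariance G g := bdryVariance_pos hx hy <| by
    simp [g, harmExt_apply_of_mem _ _ _ hx, harmExt_apply_of_mem _ _ _ hy, hxy.symm]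
  obtain ⟨lam, f, hlam, hf, -⟩ := exists_isEigenpair_mul_bdryVariance_le
    hT.connected.preconnected hB (harmExt_mem_harmonic _ _ _) hvar
  exact ⟨lam, f, hlam, hf⟩

end Spectral

section Embedding

variable [Fintype V] {W : Type} [Fintype W] {H : SimpleGraph W}

lemma map_neighborFinset_embedding (ι : H ↪g G) (w : W) :
    (H.neighborFinset w).map ι.toEmbedding = (G.neighborFinset (ι w)).filter (· ∈ Set.range ι) := by
  ext v
  simp only [mem_map, mem_neighborFinset, mem_filter, Set.mem_range]
  constructor
  · rintro ⟨w', h, rfl⟩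
    exact ⟨ι.map_adj_iff.2 h, w', rfl⟩
  · rintro ⟨h, w', rfl⟩
    exact ⟨w', ι.map_adj_iff.1 h, rfl⟩

lemma map_neighborFinset_iso (e : H ≃g G) (w : W) :
    (H.neighborFinset w).map e.toEmbedding.toEmbedding = G.neighborFinset (e w) := by
  rw [map_neighborFinset_embedding e.toEmbedding]
  exact filter_true_of_mem fun v _ => ⟨e.symm v, e.apply_symm_apply v⟩

lemma IsEigenpair.comp_iso {lam : ℝ} {f : V → ℝ} (e : H ≃g G) (hf : IsEigenpair G lam f) :
    IsEigenpair H lam (f ∘ e) := by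
  have hbdry : ∀ w, e w ∈ bdry G ↔ w ∈ bdry H := fun w => by
    rw [mem_bdry, mem_bdry, ← card_neighborFinset_eq_degree, ← map_neighborFinset_iso e, card_map,
      card_neighborFinset_eq_degree]
  have hlap : ∀ w, lap G f (e w) = lap H (f ∘ e) w := fun w => by
    rw [lap, ← map_neighborFinset_iso e, sum_map, lap]
    rfl
  refine ⟨fun h => hf.1 ?_, fun w hw => ?_, fun w hw => ?_⟩
  · ext v
    simpa using congrFun h (e.symm v)
  · rw [← hlap]
    exact hf.2.1 _ ((hbdry w).not.2 hw)
  · rw [← hlap]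
    exact hf.2.2 _ ((hbdry w).2 hw)

lemma lambda2_congr (e : H ≃g G) : lambda2 H = lambda2 G := by
  have h : ∀ lam, (∃ f, IsEigenpair G lam f) ↔ ∃ f, IsEigenpair H lam f := fun lam =>
    ⟨fun ⟨f, hf⟩ => ⟨_, hf.comp_iso e⟩, fun ⟨f, hf⟩ => ⟨_, hf.comp_iso e.symm⟩⟩
  simp only [lambda2, h]

end Embedding

section LeafExtension

variable {W : Type} {H : SimpleGraph W}

/-- `G` is obtained from `H` (embedded by `ι`) by attaching one new leaf `u` to `ι w₀`. -/
structure IsLeafExtension (ι : H ↪g G) (u : V) (w₀ : W) : Prop where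
  mem_range_iff : ∀ v, v ∈ Set.range ι ↔ v ≠ u
  adj_iff : ∀ v, G.Adj u v ↔ v = ι w₀

namespace IsLeafExtension

variable {ι : H ↪g G} {u : V} {w₀ : W} (hι : IsLeafExtension ι u w₀)
include hι

lemma apply_ne (w : W) : ι w ≠ u :=
  (hι.mem_range_iff _).1 ⟨w, rfl⟩

lemma preconnected (hH : H.Preconnected) : G.Preconnected := by
  have hreach : ∀ v, G.Reachable v (ι w₀) := fun v => by
    by_cases hv : v = u
    · exact hv ▸ ((hι.adj_iff _).2 rfl).reachable
    · obtain ⟨w, rfl⟩ := (hι.mem_range_iff v).2 hv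
      exact (hH w w₀).map ι.toHom
  exact fun v v' => (hreach v).trans (hreach v').symm

variable [Fintype V]

lemma neighborFinset_leaf : G.neighborFinset u = {ι w₀} := by
  ext v
  rw [mem_neighborFinset, hι.adj_iff, mem_singleton]

lemma degree_leaf : G.degree u = 1 := by
  rw [← card_neighborFinset_eq_degree, hι.neighborFinset_leaf, card_singleton]

lemma mem_bdry_leaf : u ∈ bdry G :=
  mem_bdry.2 hι.degree_leaf

lemma lap_leaf (g : V → ℝ) : lap G g u = g u - g (ι w₀) := by
  rw [lap, hι.neighborFinset_leaf, sum_singleton]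

variable [Fintype W]

lemma sum_neighborFinset {M : Type*} [AddCommMonoid M] (w : W) (F : V → M) :
    ∑ v ∈ G.neighborFinset (ι w), F v =
      ∑ w' ∈ H.neighborFinset w, F (ι w') + if w = w₀ then F u else 0 := by
  have herase : (G.neighborFinset (ι w)).erase u = (H.neighborFinset w).map ι.toEmbedding := by
    rw [map_neighborFinset_embedding, ← filter_ne']
    exact filter_congr fun v _ => (hι.mem_range_iff v).symm
  have hmem : u ∈ G.neighborFinset (ι w) ↔ w = w₀ := by
    rw [mem_neighborFinset, G.adj_comm, hι.adj_iff, ι.injective.eq_iff]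
  split_ifs with h
  · rw [← add_sum_erase _ _ (hmem.2 h), herase, sum_map, add_comm]
    rfl
  · rw [← erase_eq_of_notMem (hmem.not.2 h), herase, sum_map, add_zero]
    rfl

lemma degree_apply (w : W) : G.degree (ι w) = H.degree w + if w = w₀ then 1 else 0 := by
  simp_rw [← card_neighborFinset_eq_degree, card_eq_sum_ones, hι.sum_neighborFinset]

lemma lap_apply (g : V → ℝ) (w : W) :
    lap G g (ι w) = lap H (g ∘ ι) w + if w = w₀ then g (ι w₀) - g u else 0 := by
  rw [lap, hι.sum_neighborFinset]
  split_ifs with h <;> simp [lap, h]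

lemma sum_univ (F : V → ℝ) : ∑ v, F v = F u + ∑ w, F (ι w) := by
  have : (univ : Finset V) = insert u (univ.map ι.toEmbedding) := by
    ext v
    by_cases hv : v = u
    · simp [hv]
    · simpa [hv] using (hι.mem_range_iff v).2 hv
  rw [this, sum_insert (by simpa using hι.apply_ne), sum_map]
  rfl

lemma bdry_eq [Nontrivial W] (hH : H.Preconnected) :
    bdry G = insert u (((bdry H).erase w₀).map ι.toEmbedding) := by
  ext v
  by_cases hv : v = u
  · simp [hv, hι.mem_bdry_leaf]
  obtain ⟨w, rfl⟩ := (hι.mem_range_iff v).2 hv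
  have hpos := hH.degree_pos_of_nontrivial w₀
  rw [mem_bdry, hι.degree_apply]
  simp only [mem_insert, mem_map, mem_erase, mem_bdry, hv, false_or, ne_eq,
    RelEmbedding.coe_toEmbedding, EmbeddingLike.apply_eq_iff_eq, exists_eq_right]
  split_ifs with h
  · subst h
    simp only [not_true_eq_false, false_and, iff_false]
    omega
  · simp [h]

end IsLeafExtension

section

variable [Fintype W] (ι : H ↪g G) (w₀ : W)

/-- The extension of `f` to `G` that stays harmonic at the attaching vertex `ι w₀`. -/
noncomputable def leafExtend (f : W → ℝ) : V → ℝ :=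
  Function.extend ι f fun _ => f w₀ + lap H f w₀

lemma leafExtend_apply (f : W → ℝ) (w : W) : leafExtend ι w₀ f (ι w) = f w :=
  ι.injective.extend_apply _ _ _

lemma leafExtend_of_notMem_range {v : V} (hv : v ∉ Set.range ι) (f : W → ℝ) :
    leafExtend ι w₀ f v = f w₀ + lap H f w₀ :=
  Function.extend_apply' _ _ _ hv

end

namespace IsLeafExtension

variable [Fintype W] {ι : H ↪g G} {u : V} {w₀ : W} (hι : IsLeafExtension ι u w₀)
include hι

lemma leafExtend_leaf (f : W → ℝ) : leafExtend ι w₀ f u = f w₀ + lap H f w₀ :=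
  leafExtend_of_notMem_range ι w₀ (fun ⟨w, hw⟩ => hι.apply_ne w hw) f

variable [Fintype V]

lemma lap_leafExtend (f : W → ℝ) (w : W) :
    lap G (leafExtend ι w₀ f) (ι w) = lap H f w - if w = w₀ then lap H f w₀ else 0 := by
  have hcomp : leafExtend ι w₀ f ∘ ι = f := funext (leafExtend_apply ι w₀ f)
  rw [hι.lap_apply, hcomp, leafExtend_apply ι w₀, hι.leafExtend_leaf]
  split_ifs <;> ring

lemma lap_leafExtend_leaf (f : W → ℝ) : lap G (leafExtend ι w₀ f) u = lap H f w₀ := by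
  rw [hι.lap_leaf, hι.leafExtend_leaf, leafExtend_apply ι w₀]
  ring

lemma leafExtend_mem_harmonic [Nontrivial W] (hH : H.Preconnected) {f : W → ℝ}
    (hf : f ∈ harmonic H) : leafExtend ι w₀ f ∈ harmonic G := by
  refine mem_harmonic.2 fun v hv => ?_
  obtain ⟨w, rfl⟩ := (hι.mem_range_iff v).2 fun h => hv (h ▸ hι.mem_bdry_leaf)
  rw [hι.lap_leafExtend]
  split_ifs with h
  · rw [h, sub_self]
  · refine (sub_zero _).trans (mem_harmonic.1 hf w fun hw => hv ?_)
    rw [hι.bdry_eq hH]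
    exact mem_insert_of_mem (mem_map_of_mem _ (mem_erase.2 ⟨h, hw⟩))

lemma energy_leafExtend (f : W → ℝ) :
    energy G (leafExtend ι w₀ f) = energy H f + lap H f w₀ ^ 2 := by
  rw [energy, hι.sum_univ, hι.leafExtend_leaf, hι.lap_leafExtend_leaf]
  simp_rw [leafExtend_apply ι w₀, hι.lap_leafExtend, mul_sub, sum_sub_distrib, mul_ite, mul_zero,
    sum_ite_eq', if_pos (mem_univ _)]
  rw [energy]
  ring

lemma sum_bdry [Nontrivial W] (hH : H.Preconnected) (F : V → ℝ) :
    ∑ v ∈ bdry G, F v = F u + ∑ w ∈ (bdry H).erase w₀, F (ι w) := by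
  rw [hι.bdry_eq hH, sum_insert fun h => ?_, sum_map]
  · rfl
  · obtain ⟨w, -, hw⟩ := mem_map.1 h
    exact hι.apply_ne w hw

lemma energy_leafExtend_le [Nontrivial W] (hH : H.Preconnected) {lam : ℝ} {f : W → ℝ}
    (hlam : 0 < lam) (hf : IsEigenpair H lam f) :
    energy G (leafExtend ι w₀ f) ≤ lam * bdryVariance G (leafExtend ι w₀ f) := by
  have hm : (1 : ℝ) ≤ #(bdry G) := by exact_mod_cast card_pos.2 ⟨u, hι.mem_bdry_leaf⟩
  have hs := hf.sum_bdry_eq_zero hlam.ne'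
  rw [hι.energy_leafExtend, hf.energy_eq, bdryVariance_eq, hι.sum_bdry hH, hι.sum_bdry hH]
  simp only [leafExtend_apply ι w₀, hι.leafExtend_leaf]
  by_cases hw₀ : w₀ ∈ bdry H
  · rw [← add_sum_erase _ _ hw₀] at hs ⊢
    rw [hf.2.2 w₀ hw₀, show f w₀ + lam * f w₀ + ∑ w ∈ (bdry H).erase w₀, f w = lam * f w₀ by
      linarith]
    have := div_le_self (sq_nonneg (lam * f w₀)) hm
    nlinarith [mul_nonneg hlam.le (sub_nonneg.2 this), sq_nonneg (lam * f w₀)]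
  · rw [erase_eq_of_notMem hw₀, hs, hf.2.1 w₀ hw₀]
    have := mul_nonneg hlam.le (sub_nonneg.2 (div_le_self (sq_nonneg (f w₀)) hm))
    simp only [add_zero]
    linarith

/-- The leaf extension of `f` is a test function with Rayleigh quotient at most `lam`. -/
theorem lambda2_le_of_isEigenpair (hH : H.Preconnected) (hBH : (bdry H).Nonempty) {lam : ℝ}
    {f : W → ℝ} (hlam : 0 < lam) (hf : IsEigenpair H lam f) : lambda2 G ≤ lam := by
  have : Nontrivial W := let ⟨_, hx⟩ := hBH
    nontrivial_of_degree_ne_zero (by rw [mem_bdry.1 hx]; exact one_ne_zero)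
  have hle := hι.energy_leafExtend_le hH hlam hf
  have hE : 0 < energy G (leafExtend ι w₀ f) := by
    rw [hι.energy_leafExtend, hf.energy_eq]
    exact add_pos_of_pos_of_nonneg (mul_pos hlam (hf.sum_sq_bdry_pos hH hBH)) (sq_nonneg _)
  have hvar := pos_of_mul_pos_right (hE.trans_le hle) hlam.le
  refine le_of_mul_le_mul_right (le_trans ?_ hle) hvar
  exact lambda2_mul_bdryVariance_le (hι.preconnected hH) ⟨u, hι.mem_bdry_leaf⟩
    (hι.leafExtend_mem_harmonic hH hf.mem_harmonic)

theorem lambda2_le [Nontrivial W] (hH : H.IsTree) : lambda2 G ≤ lambda2 H := by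
  obtain ⟨x, -, -, hx, -⟩ := hH.exists_ne_and_degree_eq_one
  obtain ⟨lam, f, hlam, hf⟩ := exists_isEigenpair_of_isTree hH
  exact le_csInf ⟨lam, hlam, f, hf⟩ fun lam ⟨hlam, f, hf⟩ =>
    hι.lambda2_le_of_isEigenpair hH.connected.preconnected ⟨x, mem_bdry.2 hx⟩ hlam hf

end IsLeafExtension

end LeafExtension

section Trees

variable {W : Type} {H : SimpleGraph W} {φ : H →g G}

/-- Paths in a forest are unique, and the image of a path under an injective homomorphism is a
path. -/
lemma exists_map_eq_of_isPath (hG : G.IsAcyclic) (hH : H.Preconnected)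
    (hφ : Function.Injective φ) {a b : W} {p : G.Walk (φ a) (φ b)} (hp : p.IsPath) :
    ∃ q : H.Walk a b, q.map φ = p := by
  obtain ⟨q, hq⟩ := (hH a b).exists_isPath
  exact ⟨q, congrArg Subtype.val
    ((hG.subsingleton_path _ _).elim (⟨q.map φ, hq.map hφ⟩ : G.Path _ _) ⟨p, hp⟩)⟩

lemma map_adj_iff_of_isAcyclic (hG : G.IsAcyclic) (hH : H.Preconnected)
    (hφ : Function.Injective φ) {a b : W} : G.Adj (φ a) (φ b) ↔ H.Adj a b := by
  refine ⟨fun h => ?_, φ.map_adj⟩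
  obtain ⟨q, hq⟩ :=
    exists_map_eq_of_isPath hG hH hφ (Walk.IsPath.mk' (p := h.toWalk) (by simp [h.ne]))
  exact Walk.adj_of_length_eq_one (by simpa using congrArg Walk.length hq)

lemma eq_of_adj_of_notMem_range (hG : G.IsAcyclic) (hH : H.Preconnected)
    (hφ : Function.Injective φ) {y : V} (hy : y ∉ Set.range φ) {a b : W} (ha : G.Adj y (φ a))
    (hb : G.Adj y (φ b)) : a = b := by
  by_contra hab
  have hp : (Walk.cons ha.symm (Walk.cons hb Walk.nil)).IsPath := by
    have hya : φ a ≠ y := fun h => hy ⟨a, h⟩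
    have hyb : y ≠ φ b := fun h => hy ⟨b, h.symm⟩
    simp [hφ.ne hab, hya, hyb]
  obtain ⟨q, hq⟩ := exists_map_eq_of_isPath hG hH hφ hp
  have hmem : y ∈ (q.map φ).support := by simp [hq]
  rw [Walk.support_map, List.mem_map] at hmem
  obtain ⟨w, -, hw⟩ := hmem
  exact hy ⟨w, hw⟩

/-- A vertex outside `H` joined to `H` by an edge has only one neighbour in `H`, so adding it to
`H` gives a leaf extension that still embeds into `G`. -/
lemma exists_isLeafExtension (hG : G.IsTree) (hH : H.Connected) (ι : H ↪g G)
    (hι : ¬Function.Surjective ι) :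
    ∃ (H' : SimpleGraph (Option W)) (σ : H ↪g H') (a : W),
      IsLeafExtension σ none a ∧ H'.IsTree ∧ Nonempty (H' ↪g G) := by
  obtain ⟨y, hy⟩ := not_forall.1 hι
  obtain ⟨w⟩ := hH.nonempty
  obtain ⟨⟨⟨x, z⟩, hxz⟩, -, ⟨a, rfl⟩, hz⟩ :=
    (hG.connected.preconnected (ι w) y).some.exists_boundary_dart (Set.range ι) ⟨w, rfl⟩ hy
  let κ : Option W ↪ V := ι.toEmbedding.optionElim z hz
  let σ : H ↪g G.comap κ := ⟨Function.Embedding.some, ι.map_adj_iff⟩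
  have hσ_apply : ∀ w, σ w = some w := fun _ => rfl
  have hσ : IsLeafExtension σ none a := by
    refine ⟨fun v => ?_, fun v => ?_⟩
    · cases v <;> simp [hσ_apply]
    · cases v with
      | none => simp [hσ_apply]
      | some w =>
        rw [hσ_apply, Option.some_inj]
        exact ⟨fun h => eq_of_adj_of_notMem_range hG.isAcyclic hH.preconnected
          (φ := ι.toHom) ι.injective hz h hxz.symm, fun h => h ▸ hxz.symm⟩
  refine ⟨G.comap κ, σ, a, hσ, ⟨?_, hG.isAcyclic.embedding (Embedding.comap κ G)⟩,
    ⟨Embedding.comap κ G⟩⟩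
  exact (connected_iff _).2 ⟨hσ.preconnected hH.preconnected, inferInstance⟩

variable [Fintype V]

theorem lambda2_le_of_embedding (hG : G.IsTree) [Fintype W] [Nontrivial W] (hH : H.IsTree)
    (ι : H ↪g G) : lambda2 G ≤ lambda2 H := by
  obtain ⟨n, hn⟩ := Nat.exists_eq_add_of_le (Fintype.card_le_of_embedding ι.toEmbedding)
  induction n generalizing W with
  | zero =>
    have hbij := (Fintype.bijective_iff_injective_and_card ι).2 ⟨ι.injective, hn.symm⟩
    exact (lambda2_congr ⟨Equiv.ofBijective ι hbij, ι.map_adj_iff⟩).ge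
  | succ n ih =>
    obtain ⟨H', σ, a, hσ, hH', ⟨ι'⟩⟩ := exists_isLeafExtension hG hH.connected ι fun hs => by
      have := Fintype.card_le_of_surjective ι hs
      omega
    refine (ih hH' ι' ?_).trans (hσ.lambda2_le hH)
    rw [Fintype.card_option]
    omega

end Trees

theorem lambda2_monotone_general {V₁ V₂ : Type} [Fintype V₁]
    [Fintype V₂] (G₁ : SimpleGraph V₁) (G₂ : SimpleGraph V₂)
    (h₁ : G₁.IsTree) (h₂ : G₂.IsTree)
    (hc₁ : 2 ≤ Fintype.card V₁)
    (φ : G₁ →g G₂) (hφ : Function.Injective φ) :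
    lambda2 G₂ ≤ lambda2 G₁ := by
  have : Nontrivial V₁ := Fintype.one_lt_card_iff_nontrivial.1 hc₁
  exact lambda2_le_of_embedding h₂ h₁
    ⟨⟨φ, hφ⟩, map_adj_iff_of_isAcyclic h₂.isAcyclic h₁.connected.preconnected hφ⟩

/-- Monotonicity of the first nonzero Steklov eigenvalue on trees:
if the finite tree `G₁` is a subgraph of the finite tree `G₂` (i.e. there is an injective
graph homomorphism `G₁ →g G₂`), then `λ₂(G₂) ≤ λ₂(G₁)`. -/
theorem lambda2_monotone {V₁ V₂ : Type} [Fintype V₁] [DecidableEq V₁]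
    [Fintype V₂] [DecidableEq V₂] (G₁ : SimpleGraph V₁) (G₂ : SimpleGraph V₂)
    (h₁ : G₁.IsTree) (h₂ : G₂.IsTree)
    (hc₁ : 2 ≤ Fintype.card V₁) (hc₂ : 2 ≤ Fintype.card V₂)
    (φ : G₁ →g G₂) (hφ : Function.Injective φ) :
    lambda2 G₂ ≤ lambda2 G₁ :=
  lambda2_monotone_general G₁ G₂ h₁ h₂ hc₁ φ hφ
end Steklov
end

section
/- Let G=(V,E) be a finite tree with boundary δG containing x, and let f be a λ-flow to x on G. Suppose that f(z)=0 for some z∈δG∖{x}, or that f(z₁)f(z₂)<0 for some z₁,z₂∈δG∖{x}. Then there exists an edge (u,v) of G such that the branch H from (u,v) does not contain x and, writing G₁=H(u,v) and δG₁ for the set of degree-one vertices of G₁, either f(v)≤0 and f(s)>0 for all s∈δG₁∖{v}, or f(v)≥0 and f(s)<0 for all s∈δG₁∖{v}. As a consequence, λ > σ(G,x). -/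
/-!
Cut the tree at the neighbour `y` of the leaf `x`: the branch from `(y,x)` contains every other
leaf, and its leaf values include a value `≤ 0`, a value `≥ 0` and a nonzero value, since the flow
equations propagate zeros from the leaves of a branch to the whole branch and its root. Descending
through the branches, a branch whose leaf values are mixed in this sense has either a mixed child
branch or a child branch whose leaf values have one strict sign while the value at its root has
the opposite weak sign (a child with only zero leaf values forces `f = 0` at the root). On such a
branch `H(u,v)` the discrete Green formula against a monotone `mu`-flow `g` with `g x = 0` reads
`(lam - mu) Σ f g = lam g(v) Σ f - (g u - g v) f v` (sums over the leaves of the branch), and the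
right-hand side has the strict sign of the leaf values, so `mu < lam`. The same formula against
the constant `1` shows that a `0`-flow is constant, whence `lam > 0`.
-/

open Finset

attribute [local instance] Classical.propDecidable

namespace Steklov

variable {V : Type} [Fintype V] [DecidableEq V]

set_option linter.unusedSectionVars false

open SimpleGraph

section Branch

variable {G : SimpleGraph V} {a b c t u v w x y : V}

lemma mem_bdry_iff : v ∈ bdry G ↔ G.degree v = 1 := by
  simp [bdry]

lemma eq_of_adj_of_mem_bdry (ha : a ∈ bdry G) (hab : G.Adj a b) (hac : G.Adj a c) : c = b := by
  obtain ⟨d, -, hd⟩ := degree_eq_one_iff_existsUnique_adj.mp (mem_bdry_iff.mp ha)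
  exact (hd c hac).trans (hd b hab).symm

lemma exists_adj_ne_of_notMem_bdry (ha : a ∉ bdry G) (hab : G.Adj a b) :
    ∃ w, G.Adj a w ∧ w ≠ b := by
  by_contra! h
  exact ha (mem_bdry_iff.mpr
    (degree_eq_one_iff_existsUnique_adj.mpr ⟨b, hab, fun w hw => h w hw⟩))

lemma mem_of_reachable_of_adj_closed {H : SimpleGraph V} {s : Set V}
    (hs : ∀ ⦃p q⦄, H.Adj p q → p ∈ s → q ∈ s) (hr : H.Reachable a t) (ha : a ∈ s) : t ∈ s := by
  obtain ⟨p⟩ := hr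
  induction p with
  | nil => exact ha
  | cons h _ ih => exact ih (hs h ha)

lemma mem_branchSet_self : u ∈ branchSet G u v := Reachable.refl u

lemma mem_branchSet_of_adj (hw : w ∈ branchSet G u v) (hwy : G.Adj w y)
    (hne : s(w, y) ≠ s(u, v)) : y ∈ branchSet G u v :=
  hw.trans (deleteEdges_adj.mpr ⟨hwy, hne⟩).reachable

lemma branchSet_disjoint (hT : G.IsTree) (huv : G.Adj u v) :
    Disjoint (branchSet G u v) (branchSet G v u) := by
  have hbridge := isAcyclic_iff_forall_adj_isBridge.mp hT.isAcyclic huv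
  rw [isBridge_iff] at hbridge
  refine Set.disjoint_left.mpr fun w hwu hwv => hbridge (hwu.trans ?_)
  simpa [branchSet, Sym2.eq_swap] using hwv.symm

lemma notMem_branchSet (hT : G.IsTree) (huv : G.Adj u v) : v ∉ branchSet G u v :=
  fun hv => Set.disjoint_left.mp (branchSet_disjoint hT huv) hv mem_branchSet_self

lemma eq_of_adj_of_mem_branchSet (hT : G.IsTree) (huv : G.Adj u v)
    (hw : w ∈ branchSet G u v) (hy : y ∉ branchSet G u v) (hwy : G.Adj w y) :
    w = u ∧ y = v := by
  by_contra hne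
  refine hy (mem_branchSet_of_adj hw hwy fun he => hne ?_)
  rcases Sym2.eq_iff.mp he with h | ⟨rfl, rfl⟩
  · exact h
  · exact absurd hw (notMem_branchSet hT huv)

lemma branchSet_subset_of_adj (hT : G.IsTree) (hab : G.Adj a b) (haw : G.Adj a w)
    (hwb : w ≠ b) : branchSet G w a ⊆ branchSet G a b := by
  have hw : w ∈ branchSet G a b :=
    mem_branchSet_of_adj mem_branchSet_self haw fun he => by
      rcases Sym2.eq_iff.mp he with ⟨-, rfl⟩ | ⟨rfl, -⟩
      · exact hwb rfl
      · exact G.loopless.irrefl a hab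
  intro t ht
  refine (mem_of_reachable_of_adj_closed (s := branchSet G a b ∩ branchSet G w a)
    (fun p q hpq hp => ⟨?_, hp.2.trans hpq.reachable⟩) ht ⟨hw, mem_branchSet_self⟩).1
  by_contra hq
  obtain ⟨rfl, -⟩ := eq_of_adj_of_mem_branchSet hT hab hp.1 hq (deleteEdges_adj.mp hpq).1
  exact notMem_branchSet hT haw.symm hp.2

lemma exists_adj_mem_branchSet (hT : G.IsTree) (ht : t ∈ branchSet G a b) (hta : t ≠ a) :
    ∃ w, G.Adj a w ∧ w ≠ b ∧ t ∈ branchSet G w a := by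
  refine (mem_of_reachable_of_adj_closed
    (s := {t | t = a ∨ ∃ w, G.Adj a w ∧ w ≠ b ∧ t ∈ branchSet G w a})
    (fun p q hpq hp => ?_) ht (Or.inl rfl)).resolve_left hta
  obtain ⟨hpq, hne⟩ := deleteEdges_adj.mp hpq
  rcases hp with hpa | ⟨w, haw, hwb, hp⟩
  · rw [hpa] at hpq hne
    exact Or.inr ⟨q, hpq, fun h => hne (by rw [h]; rfl), mem_branchSet_self⟩
  · by_cases hq : q ∈ branchSet G w a
    · exact Or.inr ⟨w, haw, hwb, hq⟩
    · exact Or.inl (eq_of_adj_of_mem_branchSet hT haw.symm hp hq hpq).2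

lemma branchSet_induction (hT : G.IsTree) {P : V → V → Prop}
    (ih : ∀ a b, G.Adj a b → (∀ w, G.Adj a w → w ≠ b → P w a) → P a b) (hab : G.Adj a b) :
    P a b := by
  induction hn : (branchSet G a b).ncard using Nat.strong_induction_on generalizing a b with
  | _ n IH =>
    refine ih a b hab fun w haw hwb => IH _ ?_ haw.symm rfl
    rw [← hn]
    refine Set.ncard_lt_ncard ?_ (Set.toFinite _)
    exact (Set.ssubset_iff_of_subset (branchSet_subset_of_adj hT hab haw hwb)).mpr
      ⟨a, mem_branchSet_self, notMem_branchSet hT haw.symm⟩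

lemma branchSet_eq_compl_of_mem_bdry (hT : G.IsTree) (hx : x ∈ bdry G) (hyx : G.Adj y x) :
    branchSet G y x = {x}ᶜ := by
  ext w
  refine ⟨fun hw (hwx : w = x) => notMem_branchSet hT hyx (hwx ▸ hw), fun hwx => ?_⟩
  obtain ⟨p, hp⟩ := (hT.connected y w).exists_isPath
  have hxp : x ∉ p.support :=
    hp.isTrail.not_mem_support_of_subsingleton_neighborSet hyx.ne.symm (Ne.symm hwx)
      fun c hc d hd =>
        (eq_of_adj_of_mem_bdry hx hyx.symm hc).trans (eq_of_adj_of_mem_bdry hx hyx.symm hd).symm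
  exact reachable_deleteEdges_iff_exists_walk.mpr
    ⟨p, fun he => hxp (p.snd_mem_support_of_mem_edges he)⟩

lemma dist_lt_of_notMem_branchSet (hT : G.IsTree) (huv : G.Adj u v)
    (hx : x ∉ branchSet G u v) : G.dist x v < G.dist x u := by
  obtain ⟨p, hp⟩ := hT.connected.exists_walk_length_eq_dist x u
  have hv : v ∈ p.support :=
    p.snd_mem_support_of_mem_edges (p.mem_edges_of_not_reachable_deleteEdges fun h => hx h.symm)
  calc G.dist x v ≤ (p.takeUntil v hv).length := dist_le _
    _ < p.length := p.length_takeUntil_lt_length hv huv.ne.symm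
    _ = G.dist x u := hp

end Branch

noncomputable def branchLeaves (G : SimpleGraph V) (u v : V) : Finset V :=
  (bdry G).filter (· ∈ branchSet G u v)

/-- The paper's condition on `G₁ = H(u,v)`, with `δG₁ ∖ {v}` replaced by the leaves of `G` lying
in the branch (see `mem_branchLeaves_of_mem_bdry_induce`). -/
def IsSignChangeBranch (G : SimpleGraph V) (f : V → ℝ) (u v : V) : Prop :=
  (f v ≤ 0 ∧ ∀ z ∈ branchLeaves G u v, 0 < f z) ∨ (0 ≤ f v ∧ ∀ z ∈ branchLeaves G u v, f z < 0)

def SolvesFlowEq (G : SimpleGraph V) (lam : ℝ) (x : V) (f : V → ℝ) : Prop :=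
  (∀ w, w ∉ bdry G → w ≠ x → lap G f w = 0) ∧ ∀ w ∈ bdry G, w ≠ x → lap G f w = lam * f w

lemma IsFlow.solvesFlowEq {G : SimpleGraph V} {lam : ℝ} {x : V} {f : V → ℝ}
    (hf : IsFlow G lam x f) : SolvesFlowEq G lam x f :=
  hf.2

section Leaves

variable {G : SimpleGraph V} {a b w z : V}

lemma branchLeaves_subset_of_adj (hT : G.IsTree) (hab : G.Adj a b) (haw : G.Adj a w)
    (hwb : w ≠ b) : branchLeaves G w a ⊆ branchLeaves G a b := fun z hz => by
  simp only [branchLeaves, mem_filter] at hz ⊢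
  exact ⟨hz.1, branchSet_subset_of_adj hT hab haw hwb hz.2⟩

lemma exists_adj_mem_branchLeaves (hT : G.IsTree) (ha : a ∉ bdry G)
    (hz : z ∈ branchLeaves G a b) : ∃ w, G.Adj a w ∧ w ≠ b ∧ z ∈ branchLeaves G w a := by
  obtain ⟨hzb, hzS⟩ := mem_filter.mp hz
  obtain ⟨w, haw, hwb, hzw⟩ := exists_adj_mem_branchSet hT hzS fun h => ha (h ▸ hzb)
  exact ⟨w, haw, hwb, mem_filter.mpr ⟨hzb, hzw⟩⟩

lemma eq_of_mem_branchLeaves (hT : G.IsTree) (ha : a ∈ bdry G) (hab : G.Adj a b)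
    (hz : z ∈ branchLeaves G a b) : z = a := by
  by_contra hza
  obtain ⟨w, haw, hwb, -⟩ := exists_adj_mem_branchSet hT (mem_filter.mp hz).2 hza
  exact hwb (eq_of_adj_of_mem_bdry ha hab haw)

lemma branchLeaves_nonempty (hT : G.IsTree) (hab : G.Adj a b) :
    (branchLeaves G a b).Nonempty := by
  refine branchSet_induction hT (P := fun a b => (branchLeaves G a b).Nonempty)
    (fun a b hab IH => ?_) hab
  by_cases ha : a ∈ bdry G
  · exact ⟨a, mem_filter.mpr ⟨ha, mem_branchSet_self⟩⟩
  · obtain ⟨w, haw, hwb⟩ := exists_adj_ne_of_notMem_bdry ha hab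
    exact (IH w haw hwb).mono (branchLeaves_subset_of_adj hT hab haw hwb)

end Leaves

section Green

variable {G : SimpleGraph V} {a b u v x : V} {lam mu : ℝ} {f g : V → ℝ}

lemma lap_const (c : ℝ) (w : V) : lap G (fun _ => c) w = 0 := by
  simp [lap]

lemma solvesFlowEq_const_one : SolvesFlowEq G 0 x fun _ => 1 :=
  ⟨fun w _ _ => lap_const 1 w, fun w _ _ => by rw [lap_const, zero_mul]⟩

lemma lap_eq_sub_of_adj (hab : G.Adj a b) (h : ∀ y, G.Adj a y → y ≠ b → f y = f a) :
    lap G f a = f a - f b :=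
  sum_eq_single_of_mem b ((G.mem_neighborFinset a b).mpr hab) fun y hy hyb => by
    rw [h y ((G.mem_neighborFinset a y).mp hy) hyb, sub_self]

lemma SolvesFlowEq.lap_eq_zero (hf : SolvesFlowEq G lam x f) (hax : a ≠ x) (ha : f a = 0) :
    lap G f a = 0 := by
  by_cases hb : a ∈ bdry G
  · rw [hf.2 a hb hax, ha, mul_zero]
  · exact hf.1 a hb hax

/-- Discrete Green formula: only the edges leaving `S` contribute. -/
lemma sum_mul_lap_sub_mul_lap (S : Finset V) (F H : V → ℝ) :
    ∑ w ∈ S, (H w * lap G F w - F w * lap G H w)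
      = ∑ w ∈ S, ∑ y ∈ (G.neighborFinset w).filter (· ∉ S), (F w * H y - H w * F y) := by
  set A : V → V → ℝ := fun w y => F w * H y - H w * F y
  have hinside : ∑ w ∈ S, ∑ y ∈ (G.neighborFinset w).filter (· ∈ S), A w y = 0 := by
    have hS : ∀ w, ∑ y ∈ (G.neighborFinset w).filter (· ∈ S), A w y
        = ∑ y ∈ S, if G.Adj w y then A w y else 0 := by
      intro w
      rw [← sum_filter]
      congr 1
      ext y
      simp [and_comm]
    simp only [hS]
    have hcomm := sum_comm (s := S) (t := S) (f := fun w y => if G.Adj w y then A w y else 0)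
    have hneg : ∑ y ∈ S, ∑ w ∈ S, (if G.Adj w y then A w y else 0)
        = -∑ y ∈ S, ∑ w ∈ S, (if G.Adj y w then A y w else 0) := by
      simp only [← sum_neg_distrib, G.adj_comm]
      refine sum_congr rfl fun y _ => sum_congr rfl fun w _ => ?_
      split_ifs
      · ring
      · simp
    linarith
  calc ∑ w ∈ S, (H w * lap G F w - F w * lap G H w)
      = ∑ w ∈ S, ∑ y ∈ G.neighborFinset w, A w y := by
        refine sum_congr rfl fun w _ => ?_
        simp only [lap, mul_sum, ← sum_sub_distrib, A]
        exact sum_congr rfl fun y _ => by ring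
    _ = _ := by
        simp only [← sum_filter_add_sum_filter_not (G.neighborFinset _) (· ∈ S),
          sum_add_distrib, hinside, zero_add, A]

lemma sum_mul_lap_sub_mul_lap_branchSet (hT : G.IsTree) (huv : G.Adj u v) (F H : V → ℝ) :
    ∑ w ∈ (branchSet G u v).toFinset, (H w * lap G F w - F w * lap G H w)
      = F u * H v - H u * F v := by
  rw [sum_mul_lap_sub_mul_lap]
  have hu : u ∈ (branchSet G u v).toFinset := Set.mem_toFinset.mpr mem_branchSet_self
  rw [sum_eq_single_of_mem u hu fun w hw hwu => sum_eq_zero fun y hy => ?_]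
  · refine sum_eq_single_of_mem v ?_ fun y hy hyv => ?_
    · simpa using ⟨huv, notMem_branchSet hT huv⟩
    · simp only [mem_filter, mem_neighborFinset, Set.mem_toFinset] at hy
      exact absurd (eq_of_adj_of_mem_branchSet hT huv mem_branchSet_self hy.2 hy.1).2 hyv
  · simp only [mem_filter, mem_neighborFinset, Set.mem_toFinset] at hw hy
    exact absurd (eq_of_adj_of_mem_branchSet hT huv hw hy.2 hy.1).1 hwu

theorem SolvesFlowEq.green (hT : G.IsTree) (huv : G.Adj u v) (hx : x ∉ branchSet G u v)
    (hf : SolvesFlowEq G lam x f) (hg : SolvesFlowEq G mu x g) :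
    (lam - mu) * ∑ w ∈ branchLeaves G u v, f w * g w = f u * g v - g u * f v := by
  rw [← sum_mul_lap_sub_mul_lap_branchSet hT huv f g, mul_sum]
  have hwx : ∀ w ∈ (branchSet G u v).toFinset, w ≠ x :=
    fun w hw hwx => hx (hwx ▸ Set.mem_toFinset.mp hw)
  have hL : branchLeaves G u v ⊆ (branchSet G u v).toFinset :=
    fun w hw => Set.mem_toFinset.mpr (mem_filter.mp hw).2
  refine (sum_congr rfl fun w hw => ?_).trans (sum_subset hL fun w hw hwL => ?_)
  · have hb := (mem_filter.mp hw).1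
    rw [hf.2 w hb (hwx w (hL hw)), hg.2 w hb (hwx w (hL hw))]
    ring
  · have hb : w ∉ bdry G := fun hb =>
      hwL (mem_filter.mpr ⟨hb, Set.mem_toFinset.mp hw⟩)
    rw [hf.1 w hb (hwx w hw), hg.1 w hb (hwx w hw), mul_zero, mul_zero, sub_zero]

end Green

section Flow

variable {G : SimpleGraph V} {a b u v x : V} {lam mu : ℝ} {f g : V → ℝ}

theorem SolvesFlowEq.eq_zero_of_branchLeaves (hT : G.IsTree) (hf : SolvesFlowEq G lam x f)
    (hab : G.Adj a b) (hx : x ∉ branchSet G a b) (h0 : ∀ z ∈ branchLeaves G a b, f z = 0) :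
    ∀ w ∈ branchClosed G a b, f w = 0 := by
  revert hx h0
  refine branchSet_induction hT (P := fun a b => x ∉ branchSet G a b →
    (∀ z ∈ branchLeaves G a b, f z = 0) → ∀ w ∈ branchClosed G a b, f w = 0)
    (fun a b hab IH hx h0 => ?_) hab
  have hchild : ∀ w, G.Adj a w → w ≠ b → ∀ t ∈ branchClosed G w a, f t = 0 :=
    fun w haw hwb => IH w haw hwb (fun h => hx (branchSet_subset_of_adj hT hab haw hwb h))
      fun z hz => h0 z (branchLeaves_subset_of_adj hT hab haw hwb hz)
  have ha : f a = 0 := by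
    by_cases ha : a ∈ bdry G
    · exact h0 a (mem_filter.mpr ⟨ha, mem_branchSet_self⟩)
    · obtain ⟨w, haw, hwb⟩ := exists_adj_ne_of_notMem_bdry ha hab
      exact hchild w haw hwb a (Set.mem_insert a _)
  have hb : f b = 0 := by
    have hlap := lap_eq_sub_of_adj hab fun y hay hyb =>
      (hchild y hay hyb y (Set.mem_insert_of_mem _ mem_branchSet_self)).trans ha.symm
    rw [hf.lap_eq_zero (fun h => hx (h ▸ mem_branchSet_self)) ha, ha] at hlap
    linarith
  rintro w (rfl | hw)
  · exact hb
  · by_cases hwa : w = a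
    · rwa [hwa]
    · obtain ⟨c, hac, hcb, hwc⟩ := exists_adj_mem_branchSet hT hw hwa
      exact hchild c hac hcb w (Set.mem_insert_of_mem _ hwc)

lemma forall_pos_or_forall_neg {s : Finset V}
    (hmix : (∃ z ∈ s, f z ≤ 0) → (∃ z ∈ s, 0 ≤ f z) → ∀ z ∈ s, f z = 0)
    (hne : ∃ z ∈ s, f z ≠ 0) : (∀ z ∈ s, 0 < f z) ∨ ∀ z ∈ s, f z < 0 := by
  by_contra! h
  obtain ⟨⟨z₁, hz₁, h₁⟩, ⟨z₂, hz₂, h₂⟩⟩ := h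
  obtain ⟨z, hz, hfz⟩ := hne
  exact hfz (hmix ⟨z₁, hz₁, h₁⟩ ⟨z₂, hz₂, h₂⟩ z hz)

theorem SolvesFlowEq.exists_isSignChangeBranch (hT : G.IsTree) (hf : SolvesFlowEq G lam x f)
    (hab : G.Adj a b) (hx : x ∉ branchSet G a b) (hle : ∃ z ∈ branchLeaves G a b, f z ≤ 0)
    (hge : ∃ z ∈ branchLeaves G a b, 0 ≤ f z) (hne : ∃ z ∈ branchLeaves G a b, f z ≠ 0) :
    ∃ u v, G.Adj u v ∧ v ∈ branchSet G a b ∧ branchSet G u v ⊆ branchSet G a b ∧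
      IsSignChangeBranch G f u v := by
  revert hx hle hge hne
  refine branchSet_induction hT (P := fun a b => x ∉ branchSet G a b →
    (∃ z ∈ branchLeaves G a b, f z ≤ 0) → (∃ z ∈ branchLeaves G a b, 0 ≤ f z) →
    (∃ z ∈ branchLeaves G a b, f z ≠ 0) → ∃ u v, G.Adj u v ∧ v ∈ branchSet G a b ∧
      branchSet G u v ⊆ branchSet G a b ∧ IsSignChangeBranch G f u v)
    (fun a b hab IH hx hle hge hne => ?_) hab
  have hsub : ∀ {w}, G.Adj a w → w ≠ b → branchSet G w a ⊆ branchSet G a b :=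
    fun haw hwb => branchSet_subset_of_adj hT hab haw hwb
  by_cases ha : a ∈ bdry G
  · obtain ⟨z₁, hz₁, h₁⟩ := hle
    obtain ⟨z₂, hz₂, h₂⟩ := hge
    obtain ⟨z₃, hz₃, h₃⟩ := hne
    rw [eq_of_mem_branchLeaves hT ha hab hz₁] at h₁
    rw [eq_of_mem_branchLeaves hT ha hab hz₂] at h₂
    rw [eq_of_mem_branchLeaves hT ha hab hz₃] at h₃
    exact absurd (le_antisymm h₁ h₂) h₃
  by_cases hmixed : ∃ w, G.Adj a w ∧ w ≠ b ∧ (∃ z ∈ branchLeaves G w a, f z ≤ 0) ∧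
      (∃ z ∈ branchLeaves G w a, 0 ≤ f z) ∧ ∃ z ∈ branchLeaves G w a, f z ≠ 0
  · obtain ⟨w, haw, hwb, h₁, h₂, h₃⟩ := hmixed
    obtain ⟨u, v, huv, hv, huvw, hsign⟩ := IH w haw hwb (fun h => hx (hsub haw hwb h)) h₁ h₂ h₃
    exact ⟨u, v, huv, hsub haw hwb hv, huvw.trans (hsub haw hwb), hsign⟩
  push Not at hmixed
  suffices ∃ w, G.Adj a w ∧ w ≠ b ∧ IsSignChangeBranch G f w a by
    obtain ⟨w, haw, hwb, hsign⟩ := this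
    exact ⟨w, a, haw.symm, mem_branchSet_self, hsub haw hwb, hsign⟩
  have hchild : ∀ {w}, G.Adj a w → w ≠ b → (∃ z ∈ branchLeaves G w a, f z ≠ 0) →
      (∀ z ∈ branchLeaves G w a, 0 < f z) ∨ ∀ z ∈ branchLeaves G w a, f z < 0 :=
    fun haw hwb => forall_pos_or_forall_neg (hmixed _ haw hwb)
  by_cases hzero : ∃ w, G.Adj a w ∧ w ≠ b ∧ ∀ z ∈ branchLeaves G w a, f z = 0
  · obtain ⟨w, haw, hwb, h0⟩ := hzero
    have hfa : f a = 0 := hf.eq_zero_of_branchLeaves hT haw.symm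
      (fun h => hx (hsub haw hwb h)) h0 a (Set.mem_insert a _)
    obtain ⟨z, hz, hfz⟩ := hne
    obtain ⟨w', haw', hw'b, hzw'⟩ := exists_adj_mem_branchLeaves hT ha hz
    refine ⟨w', haw', hw'b, ?_⟩
    rcases hchild haw' hw'b ⟨z, hzw', hfz⟩ with hpos | hneg
    · exact Or.inl ⟨hfa.le, hpos⟩
    · exact Or.inr ⟨hfa.ge, hneg⟩
  push Not at hzero
  obtain ⟨z₁, hz₁, h₁⟩ := hle
  obtain ⟨w₁, haw₁, hw₁b, hzw₁⟩ := exists_adj_mem_branchLeaves hT ha hz₁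
  obtain ⟨z₂, hz₂, h₂⟩ := hge
  obtain ⟨w₂, haw₂, hw₂b, hzw₂⟩ := exists_adj_mem_branchLeaves hT ha hz₂
  have hneg₁ : ∀ z ∈ branchLeaves G w₁ a, f z < 0 :=
    (hchild haw₁ hw₁b (hzero w₁ haw₁ hw₁b)).resolve_left fun h => (h z₁ hzw₁).not_ge h₁
  have hpos₂ : ∀ z ∈ branchLeaves G w₂ a, 0 < f z :=
    (hchild haw₂ hw₂b (hzero w₂ haw₂ hw₂b)).resolve_right fun h => (h z₂ hzw₂).not_ge h₂
  rcases le_total (f a) 0 with hfa | hfa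
  · exact ⟨w₂, haw₂, hw₂b, Or.inl ⟨hfa, hpos₂⟩⟩
  · exact ⟨w₁, haw₁, hw₁b, Or.inr ⟨hfa, hneg₁⟩⟩

theorem SolvesFlowEq.eq_of_lam_eq_zero (hT : G.IsTree) (hf : SolvesFlowEq G 0 x f) (y z : V) :
    f y = f z := by
  have hadj : ∀ p q, G.Adj p q → x ∉ branchSet G p q → f p = f q := fun p q hpq hx => by
    have h := hf.green hT hpq hx solvesFlowEq_const_one
    simp only [sub_self, zero_mul, mul_one, one_mul] at h
    linarith
  refine mem_of_reachable_of_adj_closed (s := {t | f y = f t}) (fun p q hpq hp => ?_)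
    (hT.connected y z) rfl
  by_cases hx : x ∈ branchSet G p q
  · exact hp.trans (hadj q p hpq.symm (Set.disjoint_left.mp (branchSet_disjoint hT hpq) hx)).symm
  · exact hp.trans (hadj p q hpq hx)

lemma pos_of_strictMono_dist (hT : G.IsTree) (hgx : g x = 0)
    (hmono : ∀ y z, G.Adj y z → G.dist x z < G.dist x y → g z < g y) {w : V} (hw : w ≠ x) :
    0 < g w := by
  induction hn : G.dist x w using Nat.strong_induction_on generalizing w with
  | _ n IH =>
    obtain ⟨p, hp⟩ := hT.connected.exists_walk_length_eq_dist w x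
    cases p with
    | nil => exact absurd rfl hw
    | @cons _ y _ hwy q =>
      have hy : G.dist x y < n := by
        have := dist_le q
        rw [Walk.length_cons, dist_comm] at hp
        rw [dist_comm]
        omega
      have hgy := hmono w y hwy (hn ▸ hy)
      by_cases hyx : y = x
      · rw [hyx, hgx] at hgy
        exact hgy
      · linarith [IH _ hy hyx rfl]

theorem SolvesFlowEq.lt_of_mem_sigmaSet (hT : G.IsTree) (hlam : 0 < lam)
    (hf : SolvesFlowEq G lam x f) (huv : G.Adj u v) (hx : x ∉ branchSet G u v) (hvx : v ≠ x)
    (hsign : IsSignChangeBranch G f u v) (hmu : mu ∈ SigmaSet G x) : mu < lam := by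
  obtain ⟨-, g, ⟨-, hg⟩, hgx, hmono⟩ := hmu
  have hgv : 0 < g v := pos_of_strictMono_dist hT hgx hmono hvx
  have hguv : g v < g u := hmono u v huv (dist_lt_of_notMem_branchSet hT huv hx)
  have hgL : ∀ z ∈ branchLeaves G u v, 0 < g z := fun z hz =>
    pos_of_strictMono_dist hT hgx hmono fun h => hx (h ▸ (mem_filter.mp hz).2)
  have hL := branchLeaves_nonempty hT huv
  -- Green against `g` and against `1`, with `f u` eliminated.
  have key : (lam - mu) * ∑ z ∈ branchLeaves G u v, f z * g z
      = lam * (∑ z ∈ branchLeaves G u v, f z) * g v - (g u - g v) * f v := by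
    have h1 := hf.green hT huv hx solvesFlowEq_const_one
    simp only [sub_zero, mul_one, one_mul] at h1
    linear_combination hf.green hT huv hx hg - g v * h1
  by_contra! hle
  rcases hsign with ⟨hfv, hpos⟩ | ⟨hfv, hneg⟩
  · have hA := sum_pos (fun z hz => mul_pos (hpos z hz) (hgL z hz)) hL
    have hB := sum_pos hpos hL
    nlinarith [mul_pos (mul_pos hlam hB) hgv, mul_nonneg (sub_nonneg.2 hguv.le) (neg_nonneg.2 hfv),
      mul_nonneg (sub_nonneg.2 hle) hA.le]
  · have hA := sum_neg (fun z hz => mul_neg_of_neg_of_pos (hneg z hz) (hgL z hz)) hL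
    have hB := sum_neg hneg hL
    nlinarith [mul_neg_of_neg_of_pos (mul_neg_of_pos_of_neg hlam hB) hgv,
      mul_nonneg (sub_nonneg.2 hguv.le) hfv, mul_nonneg (sub_nonneg.2 hle) (neg_nonneg.2 hA.le)]

end Flow

section Main

variable {G : SimpleGraph V} {u v x : V} {lam : ℝ} {f : V → ℝ}

lemma mem_branchLeaves_of_mem_bdry_induce (hT : G.IsTree) (huv : G.Adj u v)
    {t : branchClosed G u v} (ht : t ∈ bdry (G.induce (branchClosed G u v))) (htv : t.1 ≠ v) :
    t.1 ∈ branchLeaves G u v := by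
  have htS : t.1 ∈ branchSet G u v := (Set.mem_insert_iff.mp t.2).resolve_left htv
  have hnbr : G.neighborSet t.1 ⊆ branchClosed G u v := fun y hy => by
    by_cases hyS : y ∈ branchSet G u v
    · exact Set.mem_insert_of_mem _ hyS
    · rw [(eq_of_adj_of_mem_branchSet hT huv htS hyS hy).2]
      exact Set.mem_insert _ _
  have hdeg : G.degree t.1 = 1 := by
    rw [← degree_induce_of_neighborSet_subset hnbr]
    convert mem_bdry_iff.mp ht
  exact mem_filter.mpr ⟨mem_bdry_iff.mpr hdeg, htS⟩

theorem IsFlow.exists_isSignChangeBranch (hT : G.IsTree) (hx : x ∈ bdry G)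
    (hf : IsFlow G lam x f)
    (hcond : (∃ z ∈ bdry G, z ≠ x ∧ f z = 0) ∨
      ∃ z₁ ∈ bdry G, ∃ z₂ ∈ bdry G, z₁ ≠ x ∧ z₂ ≠ x ∧ f z₁ * f z₂ < 0) :
    ∃ u v, G.Adj u v ∧ x ∉ branchSet G u v ∧ v ≠ x ∧ IsSignChangeBranch G f u v := by
  obtain ⟨y, hxy, -⟩ := degree_eq_one_iff_existsUnique_adj.mp (mem_bdry_iff.mp hx)
  have htop := branchSet_eq_compl_of_mem_bdry hT hx hxy.symm
  have hxtop : x ∉ branchSet G y x := notMem_branchSet hT hxy.symm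
  have hleaves : ∀ {z}, z ∈ bdry G → z ≠ x → z ∈ branchLeaves G y x := fun hz hzx =>
    mem_filter.mpr ⟨hz, htop ▸ hzx⟩
  have hsigns : (∃ z ∈ branchLeaves G y x, f z ≤ 0) ∧ ∃ z ∈ branchLeaves G y x, 0 ≤ f z := by
    rcases hcond with ⟨z, hz, hzx, h0⟩ | ⟨z₁, h₁, z₂, h₂, h₁x, h₂x, hlt⟩
    · exact ⟨⟨z, hleaves hz hzx, h0.le⟩, z, hleaves hz hzx, h0.ge⟩
    · rcases mul_neg_iff.mp hlt with ⟨hp, hn⟩ | ⟨hn, hp⟩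
      · exact ⟨⟨z₂, hleaves h₂ h₂x, hn.le⟩, z₁, hleaves h₁ h₁x, hp.le⟩
      · exact ⟨⟨z₁, hleaves h₁ h₁x, hn.le⟩, z₂, hleaves h₂ h₂x, hp.le⟩
  have hne : ∃ z ∈ branchLeaves G y x, f z ≠ 0 := by
    by_contra! h0
    refine hf.1 (funext fun w => hf.solvesFlowEq.eq_zero_of_branchLeaves hT hxy.symm hxtop h0 w ?_)
    by_cases hwx : w = x
    · exact hwx ▸ Set.mem_insert w _
    · exact Set.mem_insert_of_mem _ (htop ▸ hwx)
  obtain ⟨u, v, huv, hv, hsub, hsign⟩ :=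
    hf.solvesFlowEq.exists_isSignChangeBranch hT hxy.symm hxtop hsigns.1 hsigns.2 hne
  exact ⟨u, v, huv, fun h => hxtop (hsub h), fun h => hxtop (h ▸ hv), hsign⟩

theorem IsFlow.lam_ne_zero (hT : G.IsTree) (hf : IsFlow G lam x f)
    (hcond : (∃ z ∈ bdry G, z ≠ x ∧ f z = 0) ∨
      ∃ z₁ ∈ bdry G, ∃ z₂ ∈ bdry G, z₁ ≠ x ∧ z₂ ≠ x ∧ f z₁ * f z₂ < 0) :
    lam ≠ 0 := by
  rintro rfl
  have hconst := hf.solvesFlowEq.eq_of_lam_eq_zero hT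
  rcases hcond with ⟨z, -, -, h0⟩ | ⟨z₁, -, z₂, -, -, -, hlt⟩
  · exact hf.1 (funext fun w => (hconst w z).trans h0)
  · rw [hconst z₁ z₂] at hlt
    exact (mul_self_nonneg _).not_gt hlt

end Main

/-- If a `lam`-flow `f` to the boundary vertex `x` vanishes at some boundary
vertex `≠ x`, or takes opposite signs at two boundary vertices `≠ x`, then there is an edge
`(u,v)` whose branch `H` does not contain `x` such that on `G₁ = H(u,v)` either `f v ≤ 0` and
`f > 0` on `δG₁ ∖ {v}`, or `f v ≥ 0` and `f < 0` on `δG₁ ∖ {v}`; consequently `lam > σ(G,x)`. -/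
theorem subtree_criterion (G : SimpleGraph V) (hG : G.IsTree)
    (x : V) (hx : x ∈ bdry G) (lam : ℝ) (hlam : 0 ≤ lam) (f : V → ℝ)
    (hf : IsFlow G lam x f)
    (hcond : (∃ z ∈ bdry G, z ≠ x ∧ f z = 0) ∨
      ∃ z₁ ∈ bdry G, ∃ z₂ ∈ bdry G, z₁ ≠ x ∧ z₂ ≠ x ∧ f z₁ * f z₂ < 0) :
    (∃ u v : V, G.Adj u v ∧ x ∉ branchSet G u v ∧
      ((f v ≤ 0 ∧ ∀ t ∈ bdry (G.induce (branchClosed G u v)), t.1 ≠ v → 0 < f t.1) ∨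
       (0 ≤ f v ∧ ∀ t ∈ bdry (G.induce (branchClosed G u v)), t.1 ≠ v → f t.1 < 0))) ∧
    sigma G x < lam := by
  obtain ⟨u, v, huv, hxuv, hvx, hsign⟩ := hf.exists_isSignChangeBranch hG hx hcond
  have hleaf : ∀ t ∈ bdry (G.induce (branchClosed G u v)), t.1 ≠ v → t.1 ∈ branchLeaves G u v :=
    fun _ ht htv => mem_branchLeaves_of_mem_bdry_induce hG huv ht htv
  refine ⟨⟨u, v, huv, hxuv, ?_⟩, ?_⟩
  · rcases hsign with ⟨hfv, hpos⟩ | ⟨hfv, hneg⟩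
    · exact Or.inl ⟨hfv, fun t ht htv => hpos _ (hleaf t ht htv)⟩
    · exact Or.inr ⟨hfv, fun t ht htv => hneg _ (hleaf t ht htv)⟩
  have hlam' : 0 < lam := hlam.lt_of_ne (hf.lam_ne_zero hG hcond).symm
  rcases (SigmaSet G x).eq_empty_or_nonempty with hempty | ⟨mu, hmu⟩
  · rwa [sigma, hempty, Real.sInf_empty]
  · exact (csInf_le ⟨0, fun _ h => h.1⟩ hmu).trans_lt
      (hf.solvesFlowEq.lt_of_mem_sigmaSet hG hlam' huv hxuv hvx hsign hmu)

end Steklov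
end
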